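/- arXiv:2310.08979 — 2 statements merged into one kernel-verified Lean document; each statement's English description precedes it below -/
import Mathlib

section
/- Let A be an affine K-module, with endomorphism set Aff(A) of all affine K-module homomorphisms A → A. With the pointwise heap operation ⟨f,g,h⟩(a) = ⟨f(a),g(a),h(a)⟩, the pointwise action (α ▷_f g)(a) = α ▷_{f(a)} g(a), and composition as multiplication, Aff(A) is an associative K-affgebra, i.e., an affine K-module with a bi-affine associative multiplication. In particular, for all f,g ∈ Aff(A), α ∈ K, the map α ▷_f g is again an affine endomorphism of A. -/
universe u v

class AbHeap (H : Type v) where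
  hp : H → H → H → H
  hassoc : ∀ a b c d e : H, hp (hp a b c) d e = hp a b (hp c d e)
  hidr : ∀ a b : H, hp a b b = a
  hidl : ∀ a b : H, hp b b a = a
  hcomm : ∀ a b c : H, hp a b c = hp c b a

open AbHeap

class AffMod (K : Type u) [CommRing K] (A : Type v) extends AbHeap A where
  act : K → A → A → A
  act_hp : ∀ (α : K) (a b c d : A),
    act α a (hp b c d) = hp (act α a b) (act α a c) (act α a d)
  act_scalar_hp : ∀ (α β γ : K) (a b : A),
    act (α - β + γ) a b = hp (act α a b) (act β a b) (act γ a b)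
  act_mul : ∀ (α β : K) (a b : A), act (α * β) a b = act α a (act β a b)
  act_base : ∀ (α : K) (a b c : A), act α a b = hp (act α c b) (act α c a) a
  act_zero : ∀ a b : A, act (0 : K) a b = a
  act_one : ∀ a b : A, act (1 : K) a b = b

open AffMod

/-- A homomorphism of affine `K`-modules: a heap homomorphism preserving the action. -/
def IsAffHom (K : Type u) [CommRing K] {A : Type v} {B : Type v} [AffMod K A] [AffMod K B]
    (f : A → B) : Prop :=
  (∀ a b c : A, f (hp a b c) = hp (f a) (f b) (f c)) ∧
  (∀ (α : K) (a b : A), f (act α a b) = act α (f a) (f b))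

/-- A (left) Lie bracket on an affine `K`-module: bi-affine, heap-antisymmetric,
satisfying the heap Jacobi identity. -/
def IsLieBracket (K : Type u) [CommRing K] {A : Type v} [AffMod K A] (br : A → A → A) : Prop :=
  (∀ b : A, IsAffHom K (fun a => br a b)) ∧
  (∀ a : A, IsAffHom K (br a)) ∧
  (∀ a b : A, hp (br a b) (br a a) (br b a) = br b b) ∧
  (∀ a b c : A,
    hp (hp (br a (br b c)) (br a a) (br b (br c a))) (br b b) (br c (br a b)) = br c c)

/-!
Composition of affine maps is affine, and the pointwise heap operation and action of affine maps
are affine because the heap operation and the action are entropic: `[·,·,·]` commutes with itself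
and with `α ▷`, and `α ▷` commutes with `β ▷` since `K` is commutative.
-/

/-- The retract of the heap at `p`; in this abelian group `abel` decides heap identities. -/
def HeapRetract (A : Type v) (_p : A) : Type v := A

namespace HeapRetract

variable {A : Type v} [AbHeap A] (p : A)

def of (x : A) : HeapRetract A p := x

instance : Zero (HeapRetract A p) := ⟨of p p⟩
instance : Add (HeapRetract A p) := ⟨fun x y => of p (hp (H := A) x p y)⟩
instance : Neg (HeapRetract A p) := ⟨fun x => of p (hp (H := A) p x p)⟩

instance : AddCommGroup (HeapRetract A p) where
  add_assoc a b c := hassoc (H := A) a p b p c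
  zero_add a := hidl (H := A) a p
  add_zero a := hidr (H := A) a p
  add_comm a b := hcomm (H := A) a p b
  neg_add_cancel a :=
    (hassoc (H := A) p a p p a).trans ((congrArg (hp p a) (hidl (H := A) a p)).trans (hidr p a))
  nsmul := nsmulRec
  zsmul := zsmulRec

theorem of_hp (x y z : A) : of p (hp x y z) = of p x - of p y + of p z := by
  show hp x y z = hp (hp x p (hp p y p)) p z
  rw [← hassoc x p p y p, hidr, hassoc, hidl]

end HeapRetract

section HeapIdentities

variable {A : Type v} [AbHeap A]

open HeapRetract in
theorem hp_hp_hp_hp (a b c d e f g h i : A) :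
    hp (hp a b c) (hp d e f) (hp g h i) = hp (hp a d g) (hp b e h) (hp c f i) :=
  show of a _ = of a _ by simp only [of_hp]; abel

open HeapRetract in
theorem hp_hp_right_comm (a b c d e : A) : hp (hp a b c) d e = hp (hp a d e) b c :=
  show of a _ = of a _ by simp only [of_hp]; abel

end HeapIdentities

section ActionIdentities

variable {K : Type u} [CommRing K] {A : Type v} [AffMod K A]

theorem act_self (α : K) (a : A) : act α a a = a := by
  rw [act_base α a a a, hidl]

theorem act_hp_hp (α : K) (a b c x y z : A) :
    act α (hp a b c) (hp x y z) = hp (act α a x) (act α b y) (act α c z) :=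
  calc act α (hp a b c) (hp x y z)
      = hp (act α a (hp x y z)) (act α a (hp a b c)) (hp a b c) := act_base α _ _ a
    _ = hp (hp (act α a x) (act α a y) (act α a z))
          (hp (act α a a) (act α a b) (act α a c)) (hp a b c) := by rw [act_hp, act_hp]
    _ = hp (hp (act α a x) (act α a a) a) (hp (act α a y) (act α a b) b)
          (hp (act α a z) (act α a c) c) := hp_hp_hp_hp ..
    _ = hp (act α a x) (act α b y) (act α c z) := by
          rw [act_self, hidr, ← act_base α b y a, ← act_base α c z a]

/-- Rebasing every action at `a` turns both sides into heap expressions in the `act γ a _`,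
where the commutativity of `K` identifies `α * β` with `β * α`. -/
theorem act_act_act_comm (α β : K) (a b x y : A) :
    act α (act β a b) (act β x y) = act β (act α a x) (act α b y) :=
  calc act α (act β a b) (act β x y)
      = hp (act α a (act β x y)) (act α a (act β a b)) (act β a b) := act_base α _ _ a
    _ = hp (hp (act (α * β) a y) (act (α * β) a x) (act α a x))
          (act (α * β) a b) (act β a b) := by
          rw [act_base β x y a, act_hp, ← act_mul, ← act_mul, ← act_mul]
    _ = hp (hp (act (β * α) a y) (act (β * α) a b) (act β a b))
          (act (β * α) a x) (act α a x) := by rw [hp_hp_right_comm, mul_comm]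
    _ = act β (act α a x) (act α b y) := by
          rw [act_mul, act_mul, act_mul, ← act_hp, ← act_base α b y a, ← act_base β _ _ a]

end ActionIdentities

namespace IsAffHom

variable {K : Type u} [CommRing K] {A B C : Type v} [AffMod K A] [AffMod K B] [AffMod K C]

theorem hp_apply {f : A → B} (hf : IsAffHom K f) (a b c : A) :
    f (hp a b c) = hp (f a) (f b) (f c) :=
  hf.1 a b c

theorem act_apply {f : A → B} (hf : IsAffHom K f) (α : K) (a b : A) :
    f (act α a b) = act α (f a) (f b) :=
  hf.2 α a b

theorem pointwise_act {f g : A → B} (hf : IsAffHom K f) (hg : IsAffHom K g) (α : K) :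
    IsAffHom K (fun a => act α (f a) (g a)) :=
  ⟨fun a b c => by simp only [hf.hp_apply, hg.hp_apply, act_hp_hp],
   fun β a b => by simp only [hf.act_apply, hg.act_apply, act_act_act_comm]⟩

theorem pointwise_hp {f g h : A → B} (hf : IsAffHom K f) (hg : IsAffHom K g)
    (hh : IsAffHom K h) : IsAffHom K (fun a => hp (f a) (g a) (h a)) :=
  ⟨fun a b c => by simp only [hf.hp_apply, hg.hp_apply, hh.hp_apply, hp_hp_hp_hp],
   fun β a b => by simp only [hf.act_apply, hg.act_apply, hh.act_apply, act_hp_hp]⟩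

theorem comp {g : B → C} {f : A → B} (hg : IsAffHom K g) (hf : IsAffHom K f) :
    IsAffHom K (g ∘ f) :=
  ⟨fun a b c => by simp only [Function.comp_apply, hf.hp_apply, hg.hp_apply],
   fun α a b => by simp only [Function.comp_apply, hf.act_apply, hg.act_apply]⟩

end IsAffHom

/-- `Aff(A)` with pointwise heap operation and action and with composition is an
associative `K`-affgebra; in particular `α ▷_f g` is again affine. -/
theorem stmt5 {K : Type u} [CommRing K] {A : Type v} [AffMod K A] :
    (∀ (α : K) (f g : A → A), IsAffHom K f → IsAffHom K g →
      IsAffHom K (fun a => act α (f a) (g a))) ∧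
    (∀ f g h : A → A, IsAffHom K f → IsAffHom K g → IsAffHom K h →
      IsAffHom K (fun a => hp (f a) (g a) (h a))) ∧
    (∀ f g : A → A, IsAffHom K f → IsAffHom K g → IsAffHom K (f ∘ g)) ∧
    (∀ f g h : A → A, (f ∘ g) ∘ h = f ∘ (g ∘ h)) ∧
    (∀ k f g h : A → A, IsAffHom K k →
      (fun a => k (hp (f a) (g a) (h a))) = fun a => hp (k (f a)) (k (g a)) (k (h a))) ∧
    (∀ (α : K) (k f g : A → A), IsAffHom K k →
      (fun a => k (act α (f a) (g a))) = fun a => act α (k (f a)) (k (g a))) ∧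
    (∀ k f g h : A → A,
      (fun a => hp (f (k a)) (g (k a)) (h (k a))) = fun a => hp (f (k a)) (g (k a)) (h (k a))) :=
  ⟨fun α _ _ hf hg => hf.pointwise_act hg α,
   fun _ _ _ hf hg hh => hf.pointwise_hp hg hh,
   fun _ _ hf hg => hf.comp hg,
   fun _ _ _ => rfl,
   fun _ _ _ _ hk => funext fun _ => hk.hp_apply _ _ _,
   fun α _ _ _ hk => funext fun _ => hk.act_apply α _ _,
   fun _ _ _ _ => rfl⟩
end

section
/- Let A be an associative K-affgebra with the commutator bracket [a,b] = ⟨ab, ba, b⟩. Then for each a ∈ A, the map X_a : b ↦ [a,b] is a derivation along the identity: X_a is affine and X_a(bc) = ⟨X_a(b)c, bc, bX_a(c)⟩ for all b,c ∈ A. -/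
universe u v

open AbHeap

open AffMod

def heapGroup {A : Type v} [AbHeap A] (e : A) : AddCommGroup A :=
  letI : Zero A := ⟨e⟩
  letI : Add A := ⟨fun x y => hp x e y⟩
  letI : Neg A := ⟨fun x => hp e x e⟩
  { add := (· + ·)
    zero := 0
    neg := Neg.neg
    add_assoc := fun x y z => hassoc x e y e z
    zero_add := fun x => hidl x e
    add_zero := fun x => hidr x e
    add_comm := fun x y => hcomm x e y
    neg_add_cancel := fun x => by
      show hp (hp e x e) e x = e
      rw [hassoc, hidl, hidr]
    nsmul := nsmulRec
    zsmul := zsmulRec }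

/-- For the commutator bracket on an associative affgebra, each `X_a = [a,-]` is a
derivation along the identity. -/
theorem stmt12 {K : Type u} [CommRing K] {A : Type v} [AffMod K A]
    (mul : A → A → A)
    (hassocm : ∀ a b c : A, mul (mul a b) c = mul a (mul b c))
    (hl : ∀ b : A, IsAffHom K (fun a => mul a b))
    (hr : ∀ a : A, IsAffHom K (mul a)) (a : A) :
    IsAffHom K (fun b => hp (mul a b) (mul b a) b) ∧
    (∀ b c : A,
      hp (mul a (mul b c)) (mul (mul b c) a) (mul b c) =
        hp (mul (hp (mul a b) (mul b a) b) c) (mul b c)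
          (mul b (hp (mul a c) (mul c a) c))) := by
  letI G : AddCommGroup A := heapGroup a
  have hp_eq : ∀ x y z : A, hp x y z = x - y + z := by
    intro x y z
    show hp x y z = hp (hp x a (hp a y a)) a z
    rw [← hassoc x a a y a, hidr, hassoc, hidl]
  have mul_hp_l : ∀ b x y z : A, mul (hp x y z) b = hp (mul x b) (mul y b) (mul z b) :=
    fun b x y z => (hl b).1 x y z
  have mul_hp_r : ∀ b x y z : A, mul b (hp x y z) = hp (mul b x) (mul b y) (mul b z) :=
    fun b x y z => (hr b).1 x y z
  constructor
  · constructor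
    · intro x y z
      simp only [mul_hp_l, mul_hp_r]
      simp only [hp_eq]
      abel
    · intro α x y
      have act_eq : ∀ u v : A, act α u v = act α a v - act α a u + u := by
        intro u v
        rw [act_base α u v a, hp_eq]
      have Ta : act α a a = a := by
        have h := act_base α a a a
        rw [hidl] at h
        exact h
      have T_hp : ∀ u v w : A, act α a (hp u v w) = act α a u - act α a v + act α a w := by
        intro u v w
        rw [act_hp, hp_eq]
      simp only [(hl a).2, (hr a).2]
      rw [act_eq (mul a x) (mul a y), act_eq (mul x a) (mul y a), act_eq x y,
        act_eq (hp (mul a x) (mul x a) x) (hp (mul a y) (mul y a) y)]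
      simp only [T_hp]
      simp only [hp_eq, Ta]
      abel
  · intro b c
    simp only [mul_hp_l, mul_hp_r]
    simp only [hassocm]
    simp only [hp_eq]
    abel
end
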